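/- Let n be a positive integer and let σ, τ ∈ NC(n). The following two statements are equivalent: (1) there exists π ∈ NC(n) such that σ ≪ π and τ ≪ K(π); (2) τ ≤ K(σ) and the associated permutations satisfy P_σ⁻¹(1) = P_τ(n). Moreover, when (1) and (2) hold, the partition π with the properties stated in (1) is uniquely determined. -/

import Mathlib

open Finset

attribute [local instance] Classical.propDecidable

open scoped ComplexOrder

namespace BBP

/-- Partitions of `{1,…,m}` modeled as `Finpartition`s of `univ : Finset (Fin m)`. -/
abbrev FP (m : ℕ) := Finpartition (Finset.univ : Finset (Fin m))

noncomputable instance (m : ℕ) : Fintype (FP m) :=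
  Fintype.ofInjective (fun π : FP m => π.parts) fun a b h => by
    cases a; cases b; simpa using h

/-- `x` is the minimum of the set `C`. -/
def IsMinOf {m : ℕ} (x : Fin m) (C : Finset (Fin m)) : Prop :=
  x ∈ C ∧ ∀ y ∈ C, x ≤ y

/-- `x` is the maximum of the set `C`. -/
def IsMaxOf {m : ℕ} (x : Fin m) (C : Finset (Fin m)) : Prop :=
  x ∈ C ∧ ∀ y ∈ C, y ≤ x

/-- `a` and `b` lie in one block of `π`. -/
def SameBlock {m : ℕ} (π : FP m) (a b : Fin m) : Prop :=
  ∃ B ∈ π.parts, a ∈ B ∧ b ∈ B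

/-- `π` is non-crossing: if `i<j<k<l`, `i,k` in one block and `j,l` in one block,
then all of them are in one block. -/
def IsNC {m : ℕ} (π : FP m) : Prop :=
  ∀ i j k l : Fin m, i < j → j < k → k < l →
    SameBlock π i k → SameBlock π j l → SameBlock π i j

/-- `A` embraces `B` : `min A ≤ min B` and `max B ≤ max A`. -/
def Embraces {m : ℕ} (A B : Finset (Fin m)) : Prop :=
  ∃ a₁ a₂ b₁ b₂ : Fin m, IsMinOf a₁ A ∧ IsMaxOf a₂ A ∧ IsMinOf b₁ B ∧ IsMaxOf b₂ B ∧
    a₁ ≤ b₁ ∧ b₂ ≤ a₂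

/-- `B` strictly embraces `A` : `min B < min A` and `max A < max B`. -/
def StrictlyEmbraces {m : ℕ} (B A : Finset (Fin m)) : Prop :=
  ∃ b₁ b₂ a₁ a₂ : Fin m, IsMinOf b₁ B ∧ IsMaxOf b₂ B ∧ IsMinOf a₁ A ∧ IsMaxOf a₂ A ∧
    b₁ < a₁ ∧ a₂ < b₂

/-- `A` is an outer block of `π`. -/
def IsOuter {m : ℕ} (π : FP m) (A : Finset (Fin m)) : Prop :=
  A ∈ π.parts ∧ ¬ ∃ B ∈ π.parts, StrictlyEmbraces B A

/-- The number `|π|_out` of outer blocks of `π`. -/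
noncomputable def numOuter {m : ℕ} (π : FP m) : ℕ :=
  (π.parts.filter fun A => IsOuter π A).card

/-- Reversed refinement order: every block of `ρ` is a union of blocks of `π`. -/
def Refines {m : ℕ} (π ρ : FP m) : Prop :=
  ∀ B ∈ π.parts, ∃ C ∈ ρ.parts, B ⊆ C

/-- The partial order `π ≪ ρ`. -/
def Ll {m : ℕ} (π ρ : FP m) : Prop :=
  Refines π ρ ∧
    ∀ C ∈ ρ.parts, ∃ B ∈ π.parts, ∃ x y : Fin m,
      IsMinOf x C ∧ IsMaxOf y C ∧ x ∈ B ∧ y ∈ B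

/-- The partition `1ₙ` of `{1,…,n+1}` with a single block. -/
noncomputable def fullPart (n : ℕ) : FP (n+1) :=
  Finpartition.indiscrete (by simpa using (Finset.univ_nonempty (α := Fin (n+1))).ne_empty)

/-- `π` is an interval partition. -/
def IsIntervalPartition {m : ℕ} (π : FP m) : Prop :=
  ∀ B ∈ π.parts, ∀ x ∈ B, ∀ z ∈ B, ∀ y : Fin m, x ≤ y → y ≤ z → y ∈ B

/-- `σ` is the permutation associated to `π` : on each block `{b₁ < ⋯ < b_q}` it is the
cycle `b₁ ↦ b₂ ↦ ⋯ ↦ b_q ↦ b₁`. -/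
def IsAssocPerm {m : ℕ} (π : FP m) (σ : Equiv.Perm (Fin m)) : Prop :=
  ∀ B ∈ π.parts, ∀ b ∈ B, σ b ∈ B ∧
    ((b < σ b ∧ ∀ x ∈ B, b < x → σ b ≤ x) ∨ (IsMaxOf b B ∧ IsMinOf (σ b) B))

/-- `κ` is the Kreweras complement of `π`, characterized by `P_κ = P_π⁻¹ ∘ P_{1ₙ}`,
where `P_{1ₙ}` is the cycle `1 ↦ 2 ↦ ⋯ ↦ n ↦ 1` (i.e. `finRotate`). -/
def IsKrewerasPair {m : ℕ} (π κ : FP m) : Prop :=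
  ∃ σπ σκ : Equiv.Perm (Fin m), IsAssocPerm π σπ ∧ IsAssocPerm κ σκ ∧
    σκ = σπ⁻¹ * finRotate m

/-- the element `2a-1` of `{1,…,2n}`, in `Fin (2n)` (0-indexed). -/
def oddEmb {n : ℕ} (a : Fin n) : Fin (2*n) := ⟨2*a.val, by have := a.isLt; omega⟩

/-- the element `2a` of `{1,…,2n}`, in `Fin (2n)` (0-indexed). -/
def evenEmb {n : ℕ} (a : Fin n) : Fin (2*n) := ⟨2*a.val + 1, by have := a.isLt; omega⟩

/-- `θ = π^(odd) ∪ ρ^(even)` : the blocks of `θ` are the sets `{2a-1 : a ∈ A}` for `A`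
a block of `π` and the sets `{2b : b ∈ B}` for `B` a block of `ρ`. -/
def IsOddEvenJoin {n : ℕ} (π ρ : FP n) (θ : FP (2*n)) : Prop :=
  θ.parts = π.parts.image (fun B => B.image oddEmb) ∪
    ρ.parts.image (fun B => B.image evenEmb)

/-- a block consisting of odd elements of `{1,…,2n}` (even 0-indexed values). -/
def OddBlock {m : ℕ} (B : Finset (Fin m)) : Prop := ∀ x ∈ B, x.val % 2 = 0

/-- a block consisting of even elements of `{1,…,2n}` (odd 0-indexed values). -/
def EvenBlock {m : ℕ} (B : Finset (Fin m)) : Prop := ∀ x ∈ B, x.val % 2 = 1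

/-- every block of `θ` is contained in the odds or in the evens. -/
def ParityPreserving {m : ℕ} (θ : FP m) : Prop :=
  ∀ B ∈ θ.parts, OddBlock B ∨ EvenBlock B

def OppositeParity {m : ℕ} (A B : Finset (Fin m)) : Prop :=
  (OddBlock A ∧ EvenBlock B) ∨ (EvenBlock A ∧ OddBlock B)

def SameParity {m : ℕ} (A B : Finset (Fin m)) : Prop :=
  (OddBlock A ∧ OddBlock B) ∨ (EvenBlock A ∧ EvenBlock B)

/-- `P = Parent_θ(A)` : the unique block `P ≠ A` of `θ` embracing `A` such that every
block `A' ≠ A` of `θ` embracing `A` also embraces `P`. -/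
def IsParent {m : ℕ} (θ : FP m) (A P : Finset (Fin m)) : Prop :=
  P ∈ θ.parts ∧ P ≠ A ∧ Embraces P A ∧
    ∀ A' ∈ θ.parts, A' ≠ A → Embraces A' A → Embraces A' P

/-- `θ` has exactly two outer blocks. -/
def ExactlyTwoOuterBlocks {m : ℕ} (θ : FP m) : Prop :=
  ∃ M ∈ θ.parts, ∃ N ∈ θ.parts, M ≠ N ∧ IsOuter θ M ∧ IsOuter θ N ∧
    ∀ A ∈ θ.parts, IsOuter θ A → A = M ∨ A = N

/-- A series in `ℂ₀⟨⟨z₁,…,z_k⟩⟩`, given by its family of coefficients: `f n w` is the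
coefficient of `z_{w 0} z_{w 1} ⋯ z_{w n}` (a word of length `n+1 ≥ 1`). -/
abbrev NCSeries (k : ℕ) := (n : ℕ) → (Fin (n+1) → Fin k) → ℂ

/-- The coefficient `Cf_{w|B}(f)` of the restriction of the word `w` to the set `B`,
listing the elements of `B` in increasing order.  (Equals `1` for `B = ∅`.) -/
noncomputable def partCoeff {k m : ℕ} (f : NCSeries k) (w : Fin (m+1) → Fin k)
    (B : Finset (Fin (m+1))) : ℂ :=
  if h : B.Nonempty then
    f (B.card - 1) (fun j =>
      w ((B.orderIsoOfFin (Nat.succ_pred_eq_of_pos (Finset.card_pos.mpr h)).symm j).1))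
  else 1

/-- The generalized coefficient `Cf_{w;π}(f) = ∏_{B block of π} Cf_{w|B}(f)`. -/
noncomputable def genCoeff {k m : ℕ} (f : NCSeries k) (w : Fin (m+1) → Fin k)
    (π : FP (m+1)) : ℂ :=
  ∏ B ∈ π.parts, partCoeff f w B

/-- Linear functionals on `ℂ⟨X₁,…,X_k⟩`. -/
abbrev Dist (k : ℕ) := FreeAlgebra ℂ (Fin k) →ₗ[ℂ] ℂ

/-- `μ ∈ D_alg(k)` : `μ` is normalized by `μ(1) = 1`. -/
def IsDalg {k : ℕ} (μ : Dist k) : Prop := μ 1 = 1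

/-- The moment series `M_μ`, with `(momentSeries μ) n w = μ (X_{w 0} ⋯ X_{w n})`. -/
noncomputable def momentSeries {k : ℕ} (μ : Dist k) : NCSeries k :=
  fun _ w => μ ((List.ofFn fun j => FreeAlgebra.ι ℂ (w j)).prod)

/-- `f = R_μ` : the moments of `μ` are obtained from `f` by summation over all
non-crossing partitions. -/
def IsRTransform {k : ℕ} (μ : Dist k) (f : NCSeries k) : Prop :=
  ∀ (n : ℕ) (w : Fin (n+1) → Fin k),
    momentSeries μ n w = ∑ π : FP (n+1), if IsNC π then genCoeff f w π else 0

/-- `g = η_μ` : the moments of `μ` are obtained from `g` by summation over all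
interval partitions. -/
def IsEtaSeries {k : ℕ} (μ : Dist k) (g : NCSeries k) : Prop :=
  ∀ (n : ℕ) (w : Fin (n+1) → Fin k),
    momentSeries μ n w = ∑ π : FP (n+1), if IsIntervalPartition π then genCoeff g w π else 0

/-- `μ ∈ D_c(k)` : `μ` is the joint distribution of a `k`-tuple of selfadjoint elements
with respect to a state on a unital C*-algebra. -/
def IsDc {k : ℕ} (μ : Dist k) : Prop :=
  IsDalg μ ∧
  ∃ (A : Type) (_ : NormedRing A) (_ : StarRing A) (_ : CStarRing A)
    (_ : NormedAlgebra ℂ A) (_ : StarModule ℂ A) (_ : CompleteSpace A)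
    (φ : A →ₗ[ℂ] ℂ) (x : Fin k → A),
      φ 1 = 1 ∧ (∀ a : A, 0 ≤ φ (star a * a)) ∧ (∀ i, IsSelfAdjoint (x i)) ∧
      ∀ (n : ℕ) (w : Fin (n+1) → Fin k),
        momentSeries μ n w = φ ((List.ofFn fun j => x (w j)).prod)

/-- convergence in moments. -/
def ConvInMoments {k : ℕ} (μseq : ℕ → Dist k) (μ : Dist k) : Prop :=
  ∀ P : FreeAlgebra ℂ (Fin k),
    Filter.Tendsto (fun N => μseq N P) Filter.atTop (nhds (μ P))

/-- coefficientwise convergence of series. -/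
def ConvCoeffwise {k : ℕ} (fseq : ℕ → NCSeries k) (f : NCSeries k) : Prop :=
  ∀ (n : ℕ) (w : Fin (n+1) → Fin k),
    Filter.Tendsto (fun N => fseq N n w) Filter.atTop (nhds (f n w))

/-- `ν` is the `p`-fold free additive convolution `μ ⊞ ⋯ ⊞ μ`, i.e. `R_ν = p · R_μ`. -/
def IsNFoldFree {k : ℕ} (p : ℕ) (μ ν : Dist k) : Prop :=
  ∃ f : NCSeries k, IsRTransform μ f ∧ IsRTransform ν (fun n w => (p : ℂ) * f n w)

/-- `ν` is the `p`-fold Boolean convolution `μ ⊎ ⋯ ⊎ μ`, i.e. `η_ν = p · η_μ`. -/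
def IsNFoldBool {k : ℕ} (p : ℕ) (μ ν : Dist k) : Prop :=
  ∃ g : NCSeries k, IsEtaSeries μ g ∧ IsEtaSeries ν (fun n w => (p : ℂ) * g n w)

/-- `ν = 𝔹(μ)` : the Boolean Bercovici–Pata bijection, `R_{𝔹(μ)} = η_μ`. -/
def IsBP {k : ℕ} (μ ν : Dist k) : Prop :=
  ∃ f : NCSeries k, IsEtaSeries μ f ∧ IsRTransform ν f

/-- `μ ∈ D_c(k)` is infinitely divisible with respect to `⊞`. -/
def IsInfDiv {k : ℕ} (μ : Dist k) : Prop :=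
  IsDc μ ∧ ∀ N : ℕ, 0 < N → ∃ ν : Dist k, IsDc ν ∧ IsNFoldFree N ν μ

/-- `g = Reta(f)`, i.e. there is `μ ∈ D_alg(k)` with `f = R_μ` and `g = η_μ`. -/
def RetaRel {k : ℕ} (f g : NCSeries k) : Prop :=
  ∃ μ : Dist k, IsDalg μ ∧ IsRTransform μ f ∧ IsEtaSeries μ g



/-!
For a partition `ρ` write `x ~ y` when the interval `(x, y]` is a union of blocks of `ρ`
(`KrewerasRel`). For non-crossing `ρ` the classes of `~` are the blocks of `K(ρ)`: the permutation
`P_ρ⁻¹ ∘ P_{1ₙ}` sends each point to the next point of its class, because `z` and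
`P_ρ⁻¹(z + 1)` always bound a union of blocks of `ρ`.

Necessity: `τ ≤ K(π) ≤ K(σ)` as `K` is antitone, and `σ ≪ π`, `τ ≪ K(π)` give
`P_σ⁻¹(1) = P_π⁻¹(1) = P_{K(π)}(n) = P_τ(n)`.
Uniqueness: `K` is injective, and `K(π)` is determined by `σ` and `τ`: the ends of a block of
`K(π)` lie in one block `T` of `τ`, and the block is the class of `K(σ)` cut down to the span
of `T`.
Sufficiency: if some block `W` of `K(σ)` does not have its ends in one block of `τ`, let `μ` be
the first point of the block of `τ` containing `max W`, and merge the blocks of `σ` containing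
`min W` and `μ`. The result `σ'` is non-crossing with `σ ≪ σ'`; `K(σ')` is `K(σ)` with `W` cut
at `μ`, so `τ ≤ K(σ')`, and the end condition persists. As `σ < σ'`, induction concludes.
-/

section Blocks

variable {n : ℕ} {π ρ : FP n} {a b c : Fin n} {B : Finset (Fin n)}

theorem sameBlock_iff_mem_part : SameBlock π a b ↔ b ∈ π.part a := by
  rw [Finpartition.mem_part_iff_exists]
  exact ⟨fun ⟨B, hB, ha, hb⟩ => ⟨B, hB, hb, ha⟩, fun ⟨B, hB, hb, ha⟩ => ⟨B, hB, ha, hb⟩⟩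

theorem part_mem_parts (π : FP n) (a : Fin n) : π.part a ∈ π.parts :=
  π.part_mem.2 (mem_univ a)

theorem mem_part_self (π : FP n) (a : Fin n) : a ∈ π.part a :=
  π.mem_part (mem_univ a)

theorem SameBlock.refl (π : FP n) (a : Fin n) : SameBlock π a a :=
  ⟨_, part_mem_parts π a, mem_part_self π a, mem_part_self π a⟩

theorem SameBlock.symm (h : SameBlock π a b) : SameBlock π b a :=
  let ⟨B, hB, ha, hb⟩ := h; ⟨B, hB, hb, ha⟩

theorem SameBlock.trans (h : SameBlock π a b) (h' : SameBlock π b c) : SameBlock π a c := by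
  obtain ⟨B, hB, ha, hb⟩ := h
  obtain ⟨C, hC, hb', hc⟩ := h'
  exact ⟨B, hB, ha, π.eq_of_mem_parts hC hB hb' hb ▸ hc⟩

theorem SameBlock.of_mem (hB : B ∈ π.parts) (ha : a ∈ B) (hb : b ∈ B) : SameBlock π a b :=
  ⟨B, hB, ha, hb⟩

theorem refines_iff_sameBlock : Refines π ρ ↔ ∀ a b, SameBlock π a b → SameBlock ρ a b := by
  refine ⟨fun h a b ⟨B, hB, ha, hb⟩ => ?_, fun h B hB => ?_⟩
  · obtain ⟨C, hC, hBC⟩ := h B hB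
    exact ⟨C, hC, hBC ha, hBC hb⟩
  · obtain ⟨a, ha⟩ := π.nonempty_of_mem_parts hB
    exact ⟨ρ.part a, part_mem_parts ρ a, fun b hb =>
      sameBlock_iff_mem_part.1 (h a b ⟨B, hB, ha, hb⟩)⟩

theorem eq_of_sameBlock_iff (h : ∀ a b, SameBlock π a b ↔ SameBlock ρ a b) : π = ρ :=
  le_antisymm (refines_iff_sameBlock.2 fun a b => (h a b).1)
    (refines_iff_sameBlock.2 fun a b => (h a b).2)

theorem IsMinOf.eq (ha : IsMinOf a B) (hb : IsMinOf b B) : a = b :=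
  le_antisymm (ha.2 b hb.1) (hb.2 a ha.1)

theorem IsMaxOf.eq (ha : IsMaxOf a B) (hb : IsMaxOf b B) : a = b :=
  le_antisymm (hb.2 a ha.1) (ha.2 b hb.1)

theorem isMinOf_min' (hB : B.Nonempty) : IsMinOf (B.min' hB) B :=
  ⟨B.min'_mem hB, fun y hy => B.min'_le y hy⟩

theorem isMaxOf_max' (hB : B.Nonempty) : IsMaxOf (B.max' hB) B :=
  ⟨B.max'_mem hB, fun y hy => B.le_max' y hy⟩

end Blocks

section AssocPerm

variable {n : ℕ} {π ρ : FP n} {p q : Equiv.Perm (Fin n)} {a b : Fin n}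

def IsCyclicSucc (π : FP n) (a c : Fin n) : Prop :=
  SameBlock π a c ∧ ((a < c ∧ ∀ x, SameBlock π a x → a < x → c ≤ x) ∨
    ((∀ x, SameBlock π a x → x ≤ a) ∧ ∀ x, SameBlock π a x → c ≤ x))

theorem isAssocPerm_iff : IsAssocPerm π p ↔ ∀ a, IsCyclicSucc π a (p a) := by
  simp only [IsCyclicSucc, sameBlock_iff_mem_part]
  refine ⟨fun h a => ?_, fun h B hB b hb => ?_⟩
  · obtain ⟨hmem, hcases⟩ := h _ (part_mem_parts π a) a (mem_part_self π a)
    exact ⟨hmem, hcases.imp_right fun h' => ⟨h'.1.2, h'.2.2⟩⟩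
  obtain ⟨hmem, hcases⟩ := h b
  rw [← π.part_eq_of_mem hB hb]
  exact ⟨hmem, hcases.imp_right fun h' => ⟨⟨mem_part_self π b, h'.1⟩, ⟨hmem, h'.2⟩⟩⟩

theorem IsAssocPerm.sameBlock (hp : IsAssocPerm π p) (a : Fin n) : SameBlock π a (p a) :=
  (isAssocPerm_iff.1 hp a).1

theorem IsAssocPerm.cases (hp : IsAssocPerm π p) (a : Fin n) :
    (a < p a ∧ ∀ x, SameBlock π a x → a < x → p a ≤ x) ∨
      ((∀ x, SameBlock π a x → x ≤ a) ∧ ∀ x, SameBlock π a x → p a ≤ x) :=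
  (isAssocPerm_iff.1 hp a).2

theorem IsAssocPerm.lt_apply (hp : IsAssocPerm π p) (hab : SameBlock π a b) (hlt : a < b) :
    a < p a ∧ p a ≤ b := by
  rcases hp.cases a with ⟨h, hmin⟩ | ⟨hmax, -⟩
  · exact ⟨h, hmin b hab hlt⟩
  · exact absurd (hmax b hab) hlt.not_ge

theorem IsAssocPerm.apply_of_isMax (hp : IsAssocPerm π p) (ha : ∀ x, SameBlock π a x → x ≤ a) :
    ∀ x, SameBlock π a x → p a ≤ x := by
  rcases hp.cases a with ⟨h, -⟩ | ⟨-, hmin⟩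
  · exact absurd (ha _ (hp.sameBlock a)) h.not_ge
  · exact hmin

theorem IsAssocPerm.unique (hp : IsAssocPerm π p) (hq : IsAssocPerm π q) : p = q := by
  ext1 a
  rcases hp.cases a with ⟨hp₁, hp₂⟩ | ⟨hmax, hp₂⟩
  · obtain ⟨hq₁, hq₂⟩ := hq.lt_apply (hp.sameBlock a) hp₁
    exact le_antisymm (hp₂ _ (hq.sameBlock a) hq₁) hq₂
  · exact le_antisymm (hp₂ _ (hq.sameBlock a)) (hq.apply_of_isMax hmax _ (hp.sameBlock a))

theorem IsAssocPerm.sameCycle (hp : IsAssocPerm π p) (hab : SameBlock π a b) :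
    p.SameCycle a b := by
  suffices H : ∀ d a b, b.val - a.val = d → a ≤ b → SameBlock π a b → p.SameCycle a b by
    rcases le_total a b with h | h
    · exact H _ a b rfl h hab
    · exact (H _ b a rfl h hab.symm).symm
  intro d
  induction d using Nat.strong_induction_on with
  | _ d ih =>
    intro a b hd hle hab
    rcases hle.lt_or_eq with hlt | rfl
    · obtain ⟨h₁, h₂⟩ := hp.lt_apply hab hlt
      have hstep := ih _ (by omega) (p a) b rfl h₂
        ((hp.sameBlock a).symm.trans hab)
      exact (Equiv.Perm.SameCycle.refl p a).apply_right.trans hstep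
    · exact Equiv.Perm.SameCycle.refl p a

theorem IsAssocPerm.sameBlock_of_sameCycle (hp : IsAssocPerm π p) (h : p.SameCycle a b) :
    SameBlock π a b := by
  obtain ⟨k, -, rfl⟩ := h.exists_nat_pow_eq
  clear h
  induction k with
  | zero => exact SameBlock.refl π a
  | succ k ih => exact ih.trans (by rw [pow_succ', Equiv.Perm.mul_apply]; exact hp.sameBlock _)

theorem eq_of_isAssocPerm (hp : IsAssocPerm π p) (hq : IsAssocPerm ρ p) : π = ρ :=
  eq_of_sameBlock_iff fun _ _ =>
    ⟨fun h => hq.sameBlock_of_sameCycle (hp.sameCycle h),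
      fun h => hp.sameBlock_of_sameCycle (hq.sameCycle h)⟩

end AssocPerm

section AssocPermExists

variable {n : ℕ}

theorem injective_of_isCyclicSucc {π : FP n} {f : Fin n → Fin n}
    (hf : ∀ a, IsCyclicSucc π a (f a)) :
    Function.Injective f := by
  have key : ∀ a b, f a = f b → a < b → False := by
    intro a b hab hlt
    have hsame : SameBlock π a b := (hf a).1.trans (hab ▸ (hf b).1.symm)
    rcases (hf a).2 with ⟨ha₁, ha₂⟩ | ⟨ha, -⟩
    · rcases (hf b).2 with ⟨hb, -⟩ | ⟨-, hb⟩
      · exact (hab ▸ hb).not_ge (ha₂ b hsame hlt)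
      · exact (hab ▸ hb a hsame.symm).not_gt ha₁
    · exact absurd (ha b hsame) hlt.not_ge
  intro a b hab
  rcases lt_trichotomy a b with h | h | h
  · exact (key a b hab h).elim
  · exact h
  · exact (key b a hab.symm h).elim

theorem exists_isAssocPerm (π : FP n) : ∃ p : Equiv.Perm (Fin n), IsAssocPerm π p := by
  let above : Fin n → Finset (Fin n) := fun a => (π.part a).filter (a < ·)
  let f : Fin n → Fin n := fun a =>
    if h : (above a).Nonempty then (above a).min' h
    else (π.part a).min' ⟨a, mem_part_self π a⟩
  have hf : ∀ a, IsCyclicSucc π a (f a) := by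
    intro a
    have mem_above : ∀ x, x ∈ above a ↔ SameBlock π a x ∧ a < x := fun x => by
      simp [above, sameBlock_iff_mem_part]
    by_cases h : (above a).Nonempty
    · have hfa : f a = (above a).min' h := dif_pos h
      obtain ⟨h₁, h₂⟩ := (mem_above _).1 ((above a).min'_mem h)
      refine ⟨hfa ▸ h₁, Or.inl ⟨hfa ▸ h₂, fun x hx hax => ?_⟩⟩
      exact hfa ▸ (above a).min'_le x ((mem_above x).2 ⟨hx, hax⟩)
    · have hfa : f a = (π.part a).min' ⟨a, mem_part_self π a⟩ := dif_neg h
      refine ⟨sameBlock_iff_mem_part.2 (hfa ▸ Finset.min'_mem _ _), Or.inr ⟨fun x hx => ?_,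
        fun x hx => hfa ▸ Finset.min'_le _ x (sameBlock_iff_mem_part.1 hx)⟩⟩
      exact not_lt.1 fun hax => h ⟨x, (mem_above x).2 ⟨hx, hax⟩⟩
  let p := Equiv.ofBijective f (Finite.injective_iff_bijective.1 (injective_of_isCyclicSucc hf))
  exact ⟨p, isAssocPerm_iff.2 hf⟩

end AssocPermExists

section KrewerasRel

variable {n : ℕ} {ρ σ π : FP n} {x y z w a b : Fin n}

/-- `x` and `y` are related iff the interval between them, `(min x y, max x y]`, is a union of
blocks of `ρ`. -/
def KrewerasRel (ρ : FP n) (x y : Fin n) : Prop :=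
  ∀ a b, SameBlock ρ a b → (a ≤ x ↔ a ≤ y) → (b ≤ x ↔ b ≤ y)

theorem KrewerasRel.refl (ρ : FP n) (x : Fin n) : KrewerasRel ρ x x :=
  fun _ _ _ _ => Iff.rfl

theorem KrewerasRel.symm (h : KrewerasRel ρ x y) : KrewerasRel ρ y x :=
  fun a b hab ha => (h a b hab ha.symm).symm

theorem KrewerasRel.trans (h : KrewerasRel ρ x y) (h' : KrewerasRel ρ y z) :
    KrewerasRel ρ x z := by
  intro a b hab
  have := h a b hab
  have := h b a hab.symm
  have := h' a b hab
  have := h' b a hab.symm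
  tauto

theorem le_iff_le_iff_notMem_Ioc (hxy : x ≤ y) : (a ≤ x ↔ a ≤ y) ↔ a ∉ Set.Ioc x y := by
  simp only [Set.mem_Ioc, not_and, not_le]
  exact ⟨fun h hxa => lt_of_not_ge fun hay => hxa.not_ge (h.2 hay),
    fun h => ⟨fun hax => hax.trans hxy, fun hay => not_lt.1 fun hxa => (h hxa).not_ge hay⟩⟩

theorem KrewerasRel.mem_Ioc (h : KrewerasRel ρ x y) (hab : SameBlock ρ a b)
    (ha : a ∈ Set.Ioc x y) : b ∈ Set.Ioc x y := by
  have hxy : x ≤ y := (ha.1.trans_le ha.2).le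
  by_contra hb
  exact (le_iff_le_iff_notMem_Ioc hxy).1
    (h b a hab.symm ((le_iff_le_iff_notMem_Ioc hxy).2 hb)) ha

theorem KrewerasRel.lt_and_le_of_sameBlock_right (h : KrewerasRel ρ x y) (hxy : x < y)
    (hya : SameBlock ρ y a) : x < a ∧ a ≤ y :=
  h.mem_Ioc hya ⟨hxy, le_rfl⟩

theorem KrewerasRel.le_or_lt_of_sameBlock_left (h : KrewerasRel ρ x y)
    (hxa : SameBlock ρ x a) : a ≤ x ∨ y < a := by
  by_contra! ha
  exact (h.mem_Ioc hxa.symm ha).1.false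

theorem krewerasRel_of_mem_Ioc (hxy : x ≤ y)
    (H : ∀ a b, SameBlock ρ a b → a ∈ Set.Ioc x y → b ∈ Set.Ioc x y) : KrewerasRel ρ x y := by
  intro a b hab ha
  rw [le_iff_le_iff_notMem_Ioc hxy] at ha ⊢
  exact fun hb => ha (H b a hab.symm hb)

theorem KrewerasRel.of_refines (hσπ : Refines σ π) (h : KrewerasRel π x y) :
    KrewerasRel σ x y :=
  fun a b hab => h a b (refines_iff_sameBlock.1 hσπ a b hab)

theorem KrewerasRel.of_lt_lt_lt (hxy : x < y) (hyz : y < z) (hzw : z < w)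
    (hxz : KrewerasRel ρ x z) (hyw : KrewerasRel ρ y w) : KrewerasRel ρ x y := by
  -- `(x, y] = (x, z] \ (y, w]`
  refine krewerasRel_of_mem_Ioc hxy.le fun a b hab ha => ?_
  have hb₁ := hxz.mem_Ioc hab ⟨ha.1, ha.2.trans hyz.le⟩
  have hb₂ : b ∉ Set.Ioc y w := fun hb => (hyw.mem_Ioc hab.symm hb).1.not_ge ha.2
  exact ⟨hb₁.1, not_lt.1 fun hyb => hb₂ ⟨hyb, hb₁.2.trans hzw.le⟩⟩

def krewerasSetoid (ρ : FP n) : Setoid (Fin n) :=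
  ⟨KrewerasRel ρ, ⟨KrewerasRel.refl ρ, KrewerasRel.symm, KrewerasRel.trans⟩⟩

/-- The Kreweras complement, given by its blocks; for non-crossing `ρ` its permutation is
`P_ρ⁻¹ ∘ P_{1ₙ}` (`isAssocPerm_kreweras`). -/
noncomputable def kreweras (ρ : FP n) : FP n :=
  Finpartition.ofSetoid (krewerasSetoid ρ)

theorem sameBlock_kreweras : SameBlock (kreweras ρ) x y ↔ KrewerasRel ρ x y := by
  rw [sameBlock_iff_mem_part]
  exact Finpartition.mem_part_ofSetoid_iff_rel

theorem kreweras_antitone (hσπ : Refines σ π) : Refines (kreweras π) (kreweras σ) :=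
  refines_iff_sameBlock.2 fun _ _ h =>
    sameBlock_kreweras.2 ((sameBlock_kreweras.1 h).of_refines hσπ)

end KrewerasRel

section Gap

variable {n : ℕ} {ρ : FP n} {p : Equiv.Perm (Fin n)} {w e z : Fin n}

theorem val_finRotate_of_lt {z : Fin n} (h : z.val + 1 < n) :
    (finRotate n z).val = z.val + 1 := by
  cases n with
  | zero => exact z.elim0
  | succ m => rw [coe_finRotate_of_ne_last (fun hz => by simp [hz] at h)]

theorem val_finRotate_of_eq {z : Fin n} (h : z.val + 1 = n) : (finRotate n z).val = 0 := by
  cases n with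
  | zero => exact z.elim0
  | succ m => rw [show z = Fin.last m from Fin.ext (by simp; omega), finRotate_last, Fin.val_zero]

theorem finRotate_notMem_Ioc (z b : Fin n) : finRotate n b ∉ Set.Ioc z b := by
  rintro ⟨hz, hb⟩
  by_cases h : b.val + 1 < n
  · have := val_finRotate_of_lt h; omega
  · have := val_finRotate_of_eq (z := b) (by omega); omega

theorem finRotate_mem_Ioc {b x : Fin n} (h : b < x) : finRotate n b ∈ Set.Ioc b x := by
  have := val_finRotate_of_lt (z := b) (by omega)
  exact ⟨by omega, by omega⟩

theorem finRotate_top [NeZero n] : finRotate n ⊤ = ⊥ :=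
  Fin.ext (val_finRotate_of_eq (by rw [Fin.val_top]; have := NeZero.pos n; omega))

theorem krewerasRel_of_next_eq_succ (hρ : IsNC ρ) (hwe : SameBlock ρ w e)
    (hnext : ∀ x, SameBlock ρ w x → w < x → e ≤ x) (he : e.val = z.val + 1) (hwz : w ≤ z) :
    KrewerasRel ρ w z := by
  refine krewerasRel_of_mem_Ioc hwz fun a b hab ha => ?_
  have hea : a < e := by have := ha.2; omega
  have hwa : ¬ SameBlock ρ w a := fun h => (hnext a h ha.1).not_gt hea
  have hwb : ¬ SameBlock ρ w b := fun h => hwa (h.trans hab.symm)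
  refine ⟨lt_of_not_ge fun hbw => ?_, not_lt.1 fun hzb => ?_⟩
  · have hbw' : b < w := hbw.lt_of_ne fun h => hwb (h ▸ SameBlock.refl ρ b)
    exact hwb (hρ b w a e hbw' ha.1 hea hab.symm hwe).symm
  · have heb : e < b := lt_of_le_of_ne (by omega) fun h => hwb (h ▸ hwe)
    exact hwa (hρ w a e b ha.1 hea heb hwe hab)

theorem krewerasRel_of_min_eq_succ (hρ : IsNC ρ) (hwe : SameBlock ρ w e)
    (hmax : ∀ x, SameBlock ρ w x → x ≤ w) (hmin : ∀ x, SameBlock ρ w x → e ≤ x)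
    (he : e.val = z.val + 1) : KrewerasRel ρ z w := by
  have hze : z < e := by omega
  refine krewerasRel_of_mem_Ioc (hze.le.trans (hmin w (SameBlock.refl ρ w))) fun a b hab ha => ?_
  by_cases hwa : SameBlock ρ w a
  · exact ⟨hze.trans_le (hmin b (hwa.trans hab)), hmax b (hwa.trans hab)⟩
  have hea : e < a := lt_of_le_of_ne (by have := ha.1; omega) fun h => hwa (h ▸ hwe)
  have haw : a < w := ha.2.lt_of_ne fun h => hwa (h ▸ SameBlock.refl ρ w)
  refine ⟨lt_of_not_ge fun hbz => ?_, not_lt.1 fun hwb => ?_⟩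
  · exact hwa (hwe.trans ((hρ b e a w (hbz.trans_lt hze) hea haw hab.symm hwe.symm).symm.trans
      hab.symm))
  · exact hwa (hwe.trans (hρ e a w b hea haw hwb hwe.symm hab))

theorem krewerasRel_of_max_eq_zero (hρ : IsNC ρ) (hwe : SameBlock ρ w e)
    (hmax : ∀ x, SameBlock ρ w x → x ≤ w) (he : e.val = 0) (hz : z.val + 1 = n) :
    KrewerasRel ρ w z := by
  refine krewerasRel_of_mem_Ioc (by omega) fun a b hab ha => ?_
  have hwa : ¬ SameBlock ρ w a := fun h => (hmax a h).not_gt ha.1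
  have hwb : ¬ SameBlock ρ w b := fun h => hwa (h.trans hab.symm)
  refine ⟨lt_of_not_ge fun hbw => ?_, by omega⟩
  have hbw' : b < w := hbw.lt_of_ne fun h => hwb (h ▸ SameBlock.refl ρ b)
  have heb : e < b := lt_of_le_of_ne (by omega) fun h => hwb (h ▸ hwe)
  exact hwb (hwe.trans (hρ e b w a heb hbw' ha.1 hwe.symm hab.symm))

theorem krewerasRel_inv_finRotate (hρ : IsNC ρ) (hp : IsAssocPerm ρ p) (z : Fin n) :
    KrewerasRel ρ z (p⁻¹ (finRotate n z)) := by
  obtain ⟨hwe, hsucc⟩ : IsCyclicSucc ρ (p⁻¹ (finRotate n z)) (finRotate n z) := by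
    simpa using isAssocPerm_iff.1 hp (p⁻¹ (finRotate n z))
  by_cases hz : z.val + 1 < n
  · have he := val_finRotate_of_lt hz
    rcases hsucc with ⟨hlt, hnext⟩ | ⟨hmax, hmin⟩
    · exact (krewerasRel_of_next_eq_succ hρ hwe hnext he (by omega)).symm
    · exact krewerasRel_of_min_eq_succ hρ hwe hmax hmin he
  · have hz : z.val + 1 = n := by omega
    rcases hsucc with ⟨hlt, -⟩ | ⟨hmax, -⟩
    · exact absurd (val_finRotate_of_eq hz) (by omega)
    · exact (krewerasRel_of_max_eq_zero hρ hwe hmax (val_finRotate_of_eq hz) hz).symm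

end Gap

section KrewerasPerm

variable {n : ℕ} {ρ π₁ π₂ κ : FP n} {p : Equiv.Perm (Fin n)}

theorem isAssocPerm_kreweras (hρ : IsNC ρ) (hp : IsAssocPerm ρ p) :
    IsAssocPerm (kreweras ρ) (p⁻¹ * finRotate n) := by
  refine isAssocPerm_iff.2 fun b => ?_
  simp only [IsCyclicSucc, sameBlock_kreweras, Equiv.Perm.mul_apply]
  set k := p⁻¹ (finRotate n b)
  have hk : SameBlock ρ k (finRotate n b) := by simpa [k] using hp.sameBlock k
  -- a class-mate `x > b` of `b` has `k ∈ (b, x]`; if `k ≤ b`, no class-mate lies below `k`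
  have habove : ∀ x, KrewerasRel ρ b x → b < x → k ∈ Set.Ioc b x := fun x hx hbx =>
    hx.mem_Ioc hk.symm (finRotate_mem_Ioc hbx)
  have hbelow : ∀ x, KrewerasRel ρ b x → x < k → k ≤ b → False := fun x hx hxk hkb =>
    finRotate_notMem_Ioc x b (hx.symm.mem_Ioc hk ⟨hxk, hkb⟩)
  refine ⟨krewerasRel_inv_finRotate hρ hp b, ?_⟩
  by_cases hbk : b < k
  · exact Or.inl ⟨hbk, fun x hx hbx => (habove x hx hbx).2⟩
  · exact Or.inr ⟨fun x hx => not_lt.1 fun hbx => hbk (habove x hx hbx).1,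
      fun x hx => not_lt.1 fun hxk => hbelow x hx hxk (not_lt.1 hbk)⟩

theorem isKrewerasPair_kreweras (hρ : IsNC ρ) : IsKrewerasPair ρ (kreweras ρ) :=
  let ⟨p, hp⟩ := exists_isAssocPerm ρ
  ⟨p, _, hp, isAssocPerm_kreweras hρ hp, rfl⟩

theorem IsKrewerasPair.eq_kreweras (hρ : IsNC ρ) (h : IsKrewerasPair ρ κ) : κ = kreweras ρ := by
  obtain ⟨p, k, hp, hk, rfl⟩ := h
  exact eq_of_isAssocPerm hk (isAssocPerm_kreweras hρ hp)

theorem kreweras_injective (hπ₁ : IsNC π₁) (hπ₂ : IsNC π₂) (h : kreweras π₁ = kreweras π₂) :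
    π₁ = π₂ := by
  obtain ⟨p₁, hp₁⟩ := exists_isAssocPerm π₁
  obtain ⟨p₂, hp₂⟩ := exists_isAssocPerm π₂
  have hk₁ := isAssocPerm_kreweras hπ₁ hp₁
  rw [h] at hk₁
  have hp : p₁ = p₂ := inv_inj.1 (mul_right_cancel (hk₁.unique (isAssocPerm_kreweras hπ₂ hp₂)))
  exact eq_of_isAssocPerm hp₁ (hp ▸ hp₂)

end KrewerasPerm

section Ll

variable {n : ℕ} {σ τ π ρ : FP n} {a b m : Fin n} {B C : Finset (Fin n)}

theorem part_subset_part (h : Refines π ρ) (hab : SameBlock ρ a b) : π.part b ⊆ ρ.part a :=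
  fun _ hc => sameBlock_iff_mem_part.1
    (hab.trans (refines_iff_sameBlock.1 h _ _ (sameBlock_iff_mem_part.2 hc)))

theorem IsMinOf.of_subset {u : Fin n} (h : IsMinOf u C) (hBC : B ⊆ C) (hu : u ∈ B) :
    IsMinOf u B :=
  ⟨hu, fun x hx => h.2 x (hBC hx)⟩

theorem IsMaxOf.of_subset {v : Fin n} (h : IsMaxOf v C) (hBC : B ⊆ C) (hv : v ∈ B) :
    IsMaxOf v B :=
  ⟨hv, fun x hx => h.2 x (hBC hx)⟩

theorem Ll.exists_sameBlock (h : Ll σ π) (a : Fin n) :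
    ∃ u v, IsMinOf u (π.part a) ∧ IsMaxOf v (π.part a) ∧ SameBlock σ u v :=
  let ⟨B, hB, u, v, hu, hv, huB, hvB⟩ := h.2 _ (part_mem_parts π a)
  ⟨u, v, hu, hv, B, hB, huB, hvB⟩

theorem ll_of_exists_sameBlock (href : Refines σ π)
    (h : ∀ a, ∃ u v, IsMinOf u (π.part a) ∧ IsMaxOf v (π.part a) ∧ SameBlock σ u v) :
    Ll σ π := by
  refine ⟨href, fun C hC => ?_⟩
  obtain ⟨a, ha⟩ := π.nonempty_of_mem_parts hC
  obtain ⟨u, v, hu, hv, B, hB, huB, hvB⟩ := h a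
  rw [π.part_eq_of_mem hC ha] at hu hv
  exact ⟨B, hB, u, v, hu, hv, huB, hvB⟩

theorem Ll.refl (σ : FP n) : Ll σ σ :=
  ll_of_exists_sameBlock (le_refl σ) fun a =>
    ⟨_, _, isMinOf_min' ⟨a, mem_part_self σ a⟩, isMaxOf_max' ⟨a, mem_part_self σ a⟩,
      SameBlock.of_mem (part_mem_parts σ a) (Finset.min'_mem _ _) (Finset.max'_mem _ _)⟩

theorem Ll.trans (h₁ : Ll σ π) (h₂ : Ll π ρ) : Ll σ ρ := by
  refine ll_of_exists_sameBlock (le_trans (α := FP n) h₁.1 h₂.1) fun a => ?_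
  obtain ⟨u, v, hu, hv, huv⟩ := h₂.exists_sameBlock a
  obtain ⟨u', v', hu', hv', hu'v'⟩ := h₁.exists_sameBlock u
  have hsub := part_subset_part h₂.1 (sameBlock_iff_mem_part.2 hu.1)
  rw [hu'.eq (hu.of_subset hsub (mem_part_self π u)),
    hv'.eq (hv.of_subset hsub (sameBlock_iff_mem_part.1 huv))] at hu'v'
  exact ⟨u, v, hu, hv, hu'v'⟩

variable [NeZero n]

/-- `P_σ⁻¹(1) = P_τ(n)`, stated through the blocks: the last element of the block of `1` in `σ`
is the first element of the block of `n` in `τ`. -/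
def EndsMeet (σ τ : FP n) : Prop :=
  ∃ m, IsMaxOf m (σ.part ⊥) ∧ IsMinOf m (τ.part ⊤)

theorem Ll.isMaxOf_part_bot_iff (h : Ll σ π) :
    IsMaxOf m (σ.part ⊥) ↔ IsMaxOf m (π.part ⊥) := by
  obtain ⟨u, v, hu, hv, huv⟩ := h.exists_sameBlock ⊥
  have hsub := part_subset_part h.1 (SameBlock.refl π ⊥)
  have hu₀ : u = ⊥ := le_antisymm (hu.2 _ (mem_part_self π ⊥)) bot_le
  subst hu₀
  have hvσ : IsMaxOf v (σ.part ⊥) := hv.of_subset hsub (sameBlock_iff_mem_part.1 huv)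
  exact ⟨fun hm => hm.eq hvσ ▸ hv, fun hm => hm.eq hv ▸ hvσ⟩

theorem Ll.isMinOf_part_top_iff (h : Ll σ π) :
    IsMinOf m (σ.part ⊤) ↔ IsMinOf m (π.part ⊤) := by
  obtain ⟨u, v, hu, hv, huv⟩ := h.exists_sameBlock ⊤
  have hsub := part_subset_part h.1 (SameBlock.refl π ⊤)
  have hv₀ : v = ⊤ := le_antisymm le_top (hv.2 _ (mem_part_self π ⊤))
  subst hv₀
  have huσ : IsMinOf u (σ.part ⊤) := hu.of_subset hsub (sameBlock_iff_mem_part.1 huv.symm)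
  exact ⟨fun hm => hm.eq huσ ▸ hu, fun hm => hm.eq hu ▸ huσ⟩

theorem Ll.endsMeet_iff (h : Ll σ π) : EndsMeet σ τ ↔ EndsMeet π τ := by
  simp only [EndsMeet, h.isMaxOf_part_bot_iff]

theorem Ll.endsMeet_iff_right (h : Ll τ ρ) : EndsMeet σ τ ↔ EndsMeet σ ρ := by
  simp only [EndsMeet, h.isMinOf_part_top_iff]

end Ll

section EndsMeet

variable {n : ℕ} [NeZero n] {σ τ π : FP n} {p q : Equiv.Perm (Fin n)}

theorem IsAssocPerm.isMaxOf_inv_bot (hp : IsAssocPerm π p) : IsMaxOf (p⁻¹ ⊥) (π.part ⊥) := by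
  have hsb : SameBlock π (p⁻¹ ⊥) ⊥ := by simpa using hp.sameBlock (p⁻¹ ⊥)
  rcases hp.cases (p⁻¹ ⊥) with ⟨h, -⟩ | ⟨hmax, -⟩
  · simp at h
  · exact ⟨sameBlock_iff_mem_part.1 hsb.symm,
      fun x hx => hmax x (hsb.trans (sameBlock_iff_mem_part.2 hx))⟩

theorem IsAssocPerm.isMinOf_top (hp : IsAssocPerm π p) : IsMinOf (p ⊤) (π.part ⊤) := by
  rcases hp.cases ⊤ with ⟨h, -⟩ | ⟨-, hmin⟩
  · exact absurd h not_top_lt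
  · exact ⟨sameBlock_iff_mem_part.1 (hp.sameBlock ⊤),
      fun x hx => hmin x (sameBlock_iff_mem_part.2 hx)⟩

theorem endsMeet_kreweras (hπ : IsNC π) : EndsMeet π (kreweras π) := by
  obtain ⟨p, hp⟩ := exists_isAssocPerm π
  refine ⟨p⁻¹ ⊥, hp.isMaxOf_inv_bot, ?_⟩
  have := (isAssocPerm_kreweras hπ hp).isMinOf_top
  rwa [Equiv.Perm.mul_apply, finRotate_top] at this

theorem endsMeet_iff (hp : IsAssocPerm σ p) (hq : IsAssocPerm τ q) :
    EndsMeet σ τ ↔ p⁻¹ ⊥ = q ⊤ :=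
  ⟨fun ⟨_, h₁, h₂⟩ => (hp.isMaxOf_inv_bot.eq h₁).trans (h₂.eq hq.isMinOf_top),
    fun h => ⟨_, hp.isMaxOf_inv_bot, h ▸ hq.isMinOf_top⟩⟩

theorem endsMeet_of_ll (hπ : IsNC π) (hσπ : Ll σ π) (hτκ : Ll τ (kreweras π)) :
    EndsMeet σ τ :=
  hσπ.endsMeet_iff.2 (hτκ.endsMeet_iff_right.2 (endsMeet_kreweras hπ))

end EndsMeet

section Uniqueness

variable {n : ℕ} {σ τ π π₁ π₂ : FP n} {u v x y : Fin n}

theorem KrewerasRel.of_ll (hσπ : Ll σ π) (huv : KrewerasRel π u v) (hux : KrewerasRel σ u x)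
    (hux' : u ≤ x) (hxv : x ≤ v) : KrewerasRel π x v := by
  refine krewerasRel_of_mem_Ioc hxv fun a b hab ha => ?_
  have hau : a ∈ Set.Ioc u v := ⟨hux'.trans_lt ha.1, ha.2⟩
  refine ⟨lt_of_not_ge fun hbx => ?_, (huv.mem_Ioc hab hau).2⟩
  -- `σ ≪ π` puts the ends `p < a < q` of the block of `a` into one block of `σ`
  obtain ⟨p, q, hp, hq, hpq⟩ := hσπ.exists_sameBlock a
  have hpu := huv.mem_Ioc (sameBlock_iff_mem_part.2 hp.1) hau
  have hqx := hux.mem_Ioc hpq ⟨hpu.1, (hp.2 b (sameBlock_iff_mem_part.1 hab)).trans hbx⟩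
  exact (hq.2 a (mem_part_self π a)).not_gt (hqx.2.trans_lt ha.1)

theorem sameBlock_kreweras_of_ll (h₁σ : Ll σ π₁) (h₁τ : Ll τ (kreweras π₁)) (h₂σ : Ll σ π₂)
    (h₂τ : Ll τ (kreweras π₂)) (h : SameBlock (kreweras π₁) x y) :
    SameBlock (kreweras π₂) x y := by
  obtain ⟨u₁, v₁, hu₁, hv₁, hτ⟩ := h₁τ.exists_sameBlock x
  obtain ⟨u₂, v₂, hu₂, hv₂, -⟩ := h₂τ.exists_sameBlock u₁
  have hv₁' : SameBlock (kreweras π₂) u₁ v₁ := refines_iff_sameBlock.1 h₂τ.1 _ _ hτ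
  have huv₂ : KrewerasRel π₂ u₂ v₂ :=
    sameBlock_kreweras.1 (SameBlock.of_mem (part_mem_parts _ _) hu₂.1 hv₂.1)
  -- a class-mate `z` of `x` satisfies `u₂ ≤ u₁ ≤ z ≤ v₁ ≤ v₂`, and `u₂ ~ u₁ ~ z` in `kreweras σ`
  have key : ∀ z, SameBlock (kreweras π₁) x z → SameBlock (kreweras π₂) z v₂ := by
    intro z hz
    have hz' := sameBlock_iff_mem_part.1 hz
    have hu₂z : SameBlock (kreweras σ) u₂ z :=
      (refines_iff_sameBlock.1 (kreweras_antitone h₂σ.1) _ _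
          (sameBlock_iff_mem_part.2 hu₂.1).symm).trans
        (refines_iff_sameBlock.1 (kreweras_antitone h₁σ.1) _ _
          ((sameBlock_iff_mem_part.2 hu₁.1).symm.trans hz))
    refine sameBlock_kreweras.2 (huv₂.of_ll h₂σ (sameBlock_kreweras.1 hu₂z) ?_ ?_)
    · exact (hu₂.2 _ (mem_part_self _ u₁)).trans (hu₁.2 z hz')
    · exact (hv₁.2 z hz').trans (hv₂.2 _ (sameBlock_iff_mem_part.1 hv₁'))
  exact (key x (SameBlock.refl _ x)).trans (key y h).symm

theorem eq_of_ll (hπ₁ : IsNC π₁) (hπ₂ : IsNC π₂) (h₁σ : Ll σ π₁) (h₁τ : Ll τ (kreweras π₁))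
    (h₂σ : Ll σ π₂) (h₂τ : Ll τ (kreweras π₂)) : π₁ = π₂ :=
  kreweras_injective hπ₁ hπ₂ <| eq_of_sameBlock_iff fun _ _ =>
    ⟨sameBlock_kreweras_of_ll h₁σ h₁τ h₂σ h₂τ, sameBlock_kreweras_of_ll h₂σ h₂τ h₁σ h₁τ⟩

end Uniqueness

section Merge

variable {n : ℕ} {σ : FP n} {x y a b i j k l : Fin n}

def InMergedBlock (σ : FP n) (x y a : Fin n) : Prop :=
  SameBlock σ x a ∨ SameBlock σ y a

theorem InMergedBlock.of_sameBlock (h : InMergedBlock σ x y a) (hab : SameBlock σ a b) :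
    InMergedBlock σ x y b :=
  h.imp (·.trans hab) (·.trans hab)

def mergeSetoid (σ : FP n) (x y : Fin n) : Setoid (Fin n) where
  r a b := SameBlock σ a b ∨ (InMergedBlock σ x y a ∧ InMergedBlock σ x y b)
  iseqv := by
    refine ⟨fun a => Or.inl (SameBlock.refl σ a), fun h => h.imp SameBlock.symm And.symm,
      fun h₁ h₂ => ?_⟩
    rcases h₁ with h₁ | ⟨ha, hb⟩ <;> rcases h₂ with h₂ | ⟨hb', hc⟩
    · exact Or.inl (h₁.trans h₂)
    · exact Or.inr ⟨hb'.of_sameBlock h₁.symm, hc⟩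
    · exact Or.inr ⟨ha, hb.of_sameBlock h₂⟩
    · exact Or.inr ⟨ha, hc⟩

noncomputable def mergeBlocks (σ : FP n) (x y : Fin n) : FP n :=
  Finpartition.ofSetoid (mergeSetoid σ x y)

theorem sameBlock_mergeBlocks : SameBlock (mergeBlocks σ x y) a b ↔
    SameBlock σ a b ∨ (InMergedBlock σ x y a ∧ InMergedBlock σ x y b) := by
  rw [sameBlock_iff_mem_part]
  exact Finpartition.mem_part_ofSetoid_iff_rel

theorem le_mergeBlocks : σ ≤ mergeBlocks σ x y :=
  refines_iff_sameBlock.2 fun _ _ h => sameBlock_mergeBlocks.2 (Or.inl h)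

theorem lt_mergeBlocks (h : ¬ SameBlock σ x y) : σ < mergeBlocks σ x y :=
  lt_of_le_of_ne le_mergeBlocks fun he => h (he ▸ sameBlock_mergeBlocks.2
    (Or.inr ⟨Or.inl (SameBlock.refl σ x), Or.inr (SameBlock.refl σ y)⟩))

theorem IsNC.inMergedBlock_of_crosses (hσ : IsNC σ) (hxy : x < y) (h : KrewerasRel σ x y)
    (hij : i < j) (hjk : j < k) (hkl : k < l) (hik : SameBlock σ i k)
    (hj : InMergedBlock σ x y j) (hl : InMergedBlock σ x y l) :
    SameBlock σ i j ∨ InMergedBlock σ x y i := by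
  refine or_iff_not_imp_left.2 fun hij' => ?_
  rcases hj with hj | hj <;> rcases hl with hl | hl
  · exact absurd (hσ i j k l hij hjk hkl hik (hj.symm.trans hl)) hij'
  · have hl' := h.lt_and_le_of_sameBlock_right hxy hl
    have hjx : j ≤ x := by rcases h.le_or_lt_of_sameBlock_left hj with h' | h' <;> [exact h'; omega]
    have hkx : k ≤ x := by
      by_contra hkx
      have := Set.mem_Ioc.1 (h.mem_Ioc hik.symm ⟨by omega, by omega⟩)
      omega
    rcases hkx.lt_or_eq with hkx | rfl
    · exact Or.inl (hj.trans (hσ i j k x hij hjk hkx hik hj.symm).symm)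
    · exact Or.inl hik.symm
  · have hj' := h.lt_and_le_of_sameBlock_right hxy hj
    have hly : y < l := by rcases h.le_or_lt_of_sameBlock_left hl with h' | h' <;> [omega; exact h']
    by_cases hi' : x < i
    · rcases (h.mem_Ioc hik ⟨hi', by omega⟩).2.lt_or_eq with hky | rfl
      · exact Or.inr (hj.trans (hσ i j k y hij hjk hky hik hj.symm).symm)
      · exact Or.inr hik.symm
    · have hky : y < k := by
        by_contra hky
        have := Set.mem_Ioc.1 (h.mem_Ioc hik.symm ⟨by omega, by omega⟩)
        omega
      rcases (not_lt.1 hi').lt_or_eq with hix | rfl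
      · exact Or.inl (hσ i x k l hix (by omega) hkl hik hl).symm
      · exact Or.inl (SameBlock.refl σ i)
  · exact absurd (hσ i j k l hij hjk hkl hik (hj.symm.trans hl)) hij'

theorem IsNC.inMergedBlock_of_crossed (hσ : IsNC σ) (hxy : x < y) (h : KrewerasRel σ x y)
    (hij : i < j) (hjk : j < k) (hkl : k < l) (hi : InMergedBlock σ x y i)
    (hk : InMergedBlock σ x y k) (hjl : SameBlock σ j l) :
    SameBlock σ i j ∨ InMergedBlock σ x y j := by
  refine or_iff_not_imp_left.2 fun hij' => ?_
  rcases hi with hi | hi <;> rcases hk with hk | hk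
  · exact absurd (hσ i j k l hij hjk hkl (hi.symm.trans hk) hjl) hij'
  · have hk' := h.lt_and_le_of_sameBlock_right hxy hk
    have hix : i ≤ x := by rcases h.le_or_lt_of_sameBlock_left hi with h' | h' <;> [exact h'; omega]
    by_cases hj' : x < j
    · rcases (h.mem_Ioc hjl ⟨hj', by omega⟩).2.lt_or_eq with hly | rfl
      · exact Or.inr (hk.trans (hσ j k l y hjk hkl hly hjl hk.symm).symm)
      · exact Or.inr hjl.symm
    · have hly : y < l := by
        by_contra hly
        have := Set.mem_Ioc.1 (h.mem_Ioc hjl.symm ⟨by omega, by omega⟩)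
        omega
      rcases (not_lt.1 hj').lt_or_eq with hjx | rfl
      · exact Or.inl (hi.trans (hσ i j x l hij hjx (by omega) hi.symm hjl))
      · exact Or.inl (SameBlock.refl σ j)
  · have hi' := h.lt_and_le_of_sameBlock_right hxy hi
    have hky : y < k := by rcases h.le_or_lt_of_sameBlock_left hk with h' | h' <;> [omega; exact h']
    have hjy : y < j := by
      by_contra hjy
      have := Set.mem_Ioc.1 (h.mem_Ioc hjl ⟨by omega, by omega⟩)
      omega
    exact Or.inl (hσ x j k l (by omega) hjk hkl hk hjl)
  · exact absurd (hσ i j k l hij hjk hkl (hi.symm.trans hk) hjl) hij'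

theorem isNC_mergeBlocks (hσ : IsNC σ) (hxy : x < y) (h : KrewerasRel σ x y) :
    IsNC (mergeBlocks σ x y) := by
  intro i j k l hij hjk hkl hik hjl
  rw [sameBlock_mergeBlocks] at hik hjl ⊢
  rcases hik with hik | ⟨hi, hk⟩ <;> rcases hjl with hjl | ⟨hj, hl⟩
  · exact Or.inl (hσ i j k l hij hjk hkl hik hjl)
  · exact (hσ.inMergedBlock_of_crosses hxy h hij hjk hkl hik hj hl).imp_right (⟨·, hj⟩)
  · exact (hσ.inMergedBlock_of_crossed hxy h hij hjk hkl hi hk hjl).imp_right (⟨hi, ·⟩)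
  · exact Or.inr ⟨hi, hj⟩

end Merge

section MergeKreweras

variable {n : ℕ} {σ τ ρ : FP n} {s t x y z μ w : Fin n}

theorem ll_mergeBlocks (hxy : x < y) (h : KrewerasRel σ x y) (hz : SameBlock σ x z) (hyz : y < z) :
    Ll σ (mergeBlocks σ x y) := by
  refine ll_of_exists_sameBlock le_mergeBlocks fun a => ?_
  set C := (mergeBlocks σ x y).part a
  have hne : C.Nonempty := ⟨a, mem_part_self _ a⟩
  refine ⟨C.min' hne, C.max' hne, isMinOf_min' hne, isMaxOf_max' hne, ?_⟩
  have hu := C.min'_mem hne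
  rcases sameBlock_mergeBlocks.1 (SameBlock.of_mem (part_mem_parts _ a) hu (C.max'_mem hne))
    with huv | ⟨hu', hv'⟩
  · exact huv
  -- both ends of the merged block lie in the block of `x`, which reaches below and above `y`
  have hC : ∀ c, InMergedBlock σ x y c → c ∈ C := fun c hc =>
    sameBlock_iff_mem_part.1 ((sameBlock_iff_mem_part.2 hu).trans
      (sameBlock_mergeBlocks.2 (Or.inr ⟨hu', hc⟩)))
  have hxu : SameBlock σ x (C.min' hne) := hu'.resolve_right fun hyu =>
    (C.min'_le x (hC x (Or.inl (SameBlock.refl σ x)))).not_gt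
      (h.mem_Ioc hyu ⟨hxy, le_rfl⟩).1
  have hxv : SameBlock σ x (C.max' hne) := hv'.resolve_right fun hyv =>
    ((C.le_max' z (hC z (Or.inl hz))).trans (h.mem_Ioc hyv ⟨hxy, le_rfl⟩).2).not_gt hyz
  exact hxu.symm.trans hxv

theorem krewerasRel_mergeBlocks (h : KrewerasRel σ s t)
    (hxy : (x ≤ s ↔ x ≤ t) ↔ (y ≤ s ↔ y ≤ t)) : KrewerasRel (mergeBlocks σ x y) s t := by
  intro a b hab ha
  rcases sameBlock_mergeBlocks.1 hab with hab | ⟨ha', hb'⟩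
  · exact h a b hab ha
  have hx : x ≤ s ↔ x ≤ t := by
    rcases ha' with ha' | ha'
    · exact h a x ha'.symm ha
    · exact hxy.2 (h a y ha'.symm ha)
  rcases hb' with hb' | hb'
  · exact h x b hb' hx
  · exact h y b hb' (hxy.1 hx)

theorem KrewerasRel.mem_Ioc_iff (hst : KrewerasRel ρ s t) (hxy : KrewerasRel ρ x y)
    (hsx : ¬ KrewerasRel ρ s x) (hxy' : x < y) :
    x ∈ Set.Ioc s t ↔ y ∈ Set.Ioc s t := by
  have htx : ¬ KrewerasRel ρ t x := fun htx => hsx (hst.trans htx)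
  have hty : ¬ KrewerasRel ρ t y := fun hty => htx (hty.trans hxy.symm)
  have hsy : ¬ KrewerasRel ρ s y := fun hsy => hsx (hsy.trans hxy.symm)
  constructor
  · rintro ⟨hsx', hxt⟩
    have hxt' : x < t := hxt.lt_of_ne fun he => htx (he ▸ KrewerasRel.refl ρ x)
    refine ⟨hsx'.trans hxy', not_lt.1 fun hty' => hsx ?_⟩
    exact KrewerasRel.of_lt_lt_lt hsx' hxt' hty' hst hxy
  · rintro ⟨hsy', hyt⟩
    have hyt' : y < t := hyt.lt_of_ne fun he => hty (he ▸ KrewerasRel.refl ρ y)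
    refine ⟨lt_of_not_ge fun hxs => hsx ?_, hxy'.le.trans hyt⟩
    have hxs' : x < s := hxs.lt_of_ne fun he => hsx (he ▸ KrewerasRel.refl ρ x)
    exact (KrewerasRel.of_lt_lt_lt hxs' hsy' hyt' hxy hst).symm

theorem IsNC.le_iff_le_of_isMinOf (hτ : IsNC τ) (hμ : IsMinOf μ (τ.part w))
    (htt' : SameBlock τ t t') (ht : t ≤ w) (ht' : t' ≤ w) : μ ≤ t ↔ μ ≤ t' := by
  suffices H : ∀ t t', SameBlock τ t t' → t' ≤ w → t < μ → μ ≤ t' → False by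
    exact ⟨fun h => not_lt.1 fun h' => H t' t htt'.symm ht h' h,
      fun h => not_lt.1 fun h' => H t t' htt' ht' h' h⟩
  intro t t' htt' ht' htμ hμt'
  have hμw : SameBlock τ w μ := sameBlock_iff_mem_part.2 hμ.1
  have htw : ¬ SameBlock τ w t := fun h => (hμ.2 t (sameBlock_iff_mem_part.1 h)).not_gt htμ
  have hμt'' : μ < t' := hμt'.lt_of_ne fun he => htw (hμw.trans (he ▸ htt'.symm))
  have ht'w : t' < w := ht'.lt_of_ne fun he => htw (he ▸ htt'.symm)
  exact htw (hμw.trans (hτ t μ t' w htμ hμt'' ht'w htt' hμw.symm).symm)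

end MergeKreweras

section Existence

variable {n : ℕ} {σ τ : FP n} {W : Finset (Fin n)} {a b w₁ w₂ μ : Fin n}

theorem mem_of_krewerasRel (hW : W ∈ (kreweras σ).parts) (ha : a ∈ W)
    (h : KrewerasRel σ a b) : b ∈ W :=
  (kreweras σ).part_eq_of_mem hW ha ▸ sameBlock_iff_mem_part.1 (sameBlock_kreweras.2 h)

theorem sameBlock_min_finRotate_max (hσ : IsNC σ) (hW : W ∈ (kreweras σ).parts) (h₁ : IsMinOf w₁ W)
    (h₂ : IsMaxOf w₂ W) : SameBlock σ w₁ (finRotate n w₂) := by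
  obtain ⟨p, hp⟩ := exists_isAssocPerm σ
  have hk := isAssocPerm_kreweras hσ hp
  have hnext : (p⁻¹ * finRotate n) w₂ ∈ W :=
    (kreweras σ).part_eq_of_mem hW h₂.1 ▸ sameBlock_iff_mem_part.1 (hk.sameBlock w₂)
  have hkw : (p⁻¹ * finRotate n) w₂ = w₁ := by
    rcases hk.cases w₂ with ⟨hlt, -⟩ | ⟨-, hmin⟩
    · exact absurd (h₂.2 _ hnext) hlt.not_ge
    · exact le_antisymm (hmin w₁ (SameBlock.of_mem hW h₂.1 h₁.1)) (h₁.2 _ hnext)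
  rw [Equiv.Perm.mul_apply, Equiv.Perm.inv_eq_iff_eq] at hkw
  exact hkw ▸ hp.sameBlock w₁

theorem refines_kreweras_mergeBlocks (hτ : IsNC τ) (href : Refines τ (kreweras σ))
    (hW : W ∈ (kreweras σ).parts) (h₁ : IsMinOf w₁ W) (h₂ : IsMaxOf w₂ W)
    (hμ : IsMinOf μ (τ.part w₂)) (hμW : μ ∈ W) (hw₁μ : w₁ < μ) :
    Refines τ (kreweras (mergeBlocks σ w₁ μ)) := by
  suffices H : ∀ t t', SameBlock τ t t' → t ≤ t' → KrewerasRel (mergeBlocks σ w₁ μ) t t' by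
    refine refines_iff_sameBlock.2 fun t t' htt' => sameBlock_kreweras.2 ?_
    rcases le_total t t' with h | h
    · exact H t t' htt' h
    · exact (H t' t htt'.symm h).symm
  intro t t' htt' hle
  have hK := sameBlock_kreweras.1 (refines_iff_sameBlock.1 href t t' htt')
  have hw₁μK : KrewerasRel σ w₁ μ := sameBlock_kreweras.1 (SameBlock.of_mem hW h₁.1 hμW)
  refine krewerasRel_mergeBlocks hK ?_
  by_cases htW : t ∈ W
  · -- the τ-block of `t` lies on one side of `μ`
    have ht'W := mem_of_krewerasRel hW htW hK
    exact iff_of_true (iff_of_true (h₁.2 t htW) (h₁.2 t' ht'W))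
      (hτ.le_iff_le_of_isMinOf hμ htt' (h₂.2 t htW) (h₂.2 t' ht'W))
  · -- classes of the Kreweras complement do not cross
    rw [le_iff_le_iff_notMem_Ioc hle, le_iff_le_iff_notMem_Ioc hle, not_iff_not]
    exact hK.mem_Ioc_iff hw₁μK (fun h => htW (mem_of_krewerasRel hW h₁.1 h.symm)) hw₁μ

variable [NeZero n]

theorem exists_lt_of_not_sameBlock (hσ : IsNC σ) (hτ : IsNC τ) (href : Refines τ (kreweras σ))
    (hends : EndsMeet σ τ) (hW : W ∈ (kreweras σ).parts) (h₁ : IsMinOf w₁ W)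
    (h₂ : IsMaxOf w₂ W) (hviol : ¬ SameBlock τ w₁ w₂) :
    ∃ σ', σ < σ' ∧ IsNC σ' ∧ Ll σ σ' ∧ Refines τ (kreweras σ') := by
  have hKR : ∀ {a b}, a ∈ W → b ∈ W → KrewerasRel σ a b := fun ha hb =>
    sameBlock_kreweras.1 (SameBlock.of_mem hW ha hb)
  set μ := (τ.part w₂).min' ⟨w₂, mem_part_self τ w₂⟩
  have hμ : IsMinOf μ (τ.part w₂) := isMinOf_min' _
  have hμW : μ ∈ W := (kreweras σ).part_eq_of_mem hW h₂.1 ▸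
    part_subset_part href (SameBlock.refl _ w₂) hμ.1
  have hw₁μ : w₁ < μ := (h₁.2 μ hμW).lt_of_ne fun he =>
    hviol (he ▸ sameBlock_iff_mem_part.2 hμ.1).symm
  -- `w₂` is not the last point: otherwise `μ`, which ends the block of `1` in `σ`, would lie
  -- in `(w₁, n]`, and then so would `1`
  have hw₂ : w₂ < ⊤ := by
    refine lt_of_le_of_ne le_top fun htop => ?_
    obtain ⟨m, hmσ, hmτ⟩ := hends
    rw [← htop] at hmτ
    rw [← hμ.eq hmτ] at hmσ
    exact not_lt_bot ((hKR h₁.1 h₂.1).mem_Ioc (sameBlock_iff_mem_part.2 hmσ.1).symm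
      ⟨hw₁μ, htop ▸ le_top⟩).1
  have hμc : μ < finRotate n w₂ := by
    have := val_finRotate_of_lt (z := w₂) (by have := Fin.val_top n; omega)
    have := h₂.2 μ hμW
    omega
  refine ⟨mergeBlocks σ w₁ μ, lt_mergeBlocks fun h => ?_, isNC_mergeBlocks hσ hw₁μ (hKR h₁.1 hμW),
    ll_mergeBlocks hw₁μ (hKR h₁.1 hμW) (sameBlock_min_finRotate_max hσ hW h₁ h₂) hμc,
    refines_kreweras_mergeBlocks hτ href hW h₁ h₂ hμ hμW hw₁μ⟩
  exact ((hKR h₁.1 hμW).mem_Ioc h.symm ⟨hw₁μ, le_rfl⟩).1.false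

theorem exists_ll_kreweras (hτ : IsNC τ) (σ : FP n) (hσ : IsNC σ)
    (href : Refines τ (kreweras σ)) (hends : EndsMeet σ τ) :
    ∃ π, IsNC π ∧ Ll σ π ∧ Ll τ (kreweras π) := by
  induction σ using WellFoundedGT.induction with
  | _ σ ih =>
  by_cases hll : Ll τ (kreweras σ)
  · exact ⟨σ, hσ, Ll.refl σ, hll⟩
  obtain ⟨W, hW, hviol⟩ : ∃ W ∈ (kreweras σ).parts,
      ¬ ∃ B ∈ τ.parts, ∃ x y, IsMinOf x W ∧ IsMaxOf y W ∧ x ∈ B ∧ y ∈ B := by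
    by_contra! h
    exact hll ⟨href, h⟩
  have hne := (kreweras σ).nonempty_of_mem_parts hW
  obtain ⟨σ', hlt, hσ', hσσ', href'⟩ := exists_lt_of_not_sameBlock hσ hτ href hends hW
    (isMinOf_min' hne) (isMaxOf_max' hne) fun ⟨B, hB, h₁, h₂⟩ =>
      hviol ⟨B, hB, _, _, isMinOf_min' hne, isMaxOf_max' hne, h₁, h₂⟩
  obtain ⟨π, hπ, hσ'π, hτπ⟩ := ih σ' hlt hσ' href' (hσσ'.endsMeet_iff.1 hends)
  exact ⟨π, hπ, hσσ'.trans hσ'π, hτπ⟩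

end Existence

/-- Corollary 6.11: for `σ, τ ∈ NC(n)`:
(1) there exists `π ∈ NC(n)` with `σ ≪ π` and `τ ≪ K(π)` iff `τ ≤ K(σ)` and
`P_σ⁻¹(1) = P_τ(n)`; moreover such a `π` is unique when it exists. -/
theorem statement18 (n : ℕ) (hn : 0 < n) (σ τ : FP n) (hσ : IsNC σ) (hτ : IsNC τ)
    (κσ : FP n) (hκσ : IsKrewerasPair σ κσ)
    (σp τp : Equiv.Perm (Fin n)) (hσp : IsAssocPerm σ σp) (hτp : IsAssocPerm τ τp) :
    ((∃ π κ : FP n, IsNC π ∧ IsKrewerasPair π κ ∧ Ll σ π ∧ Ll τ κ) ↔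
      (Refines τ κσ ∧ σp⁻¹ ⟨0, hn⟩ = τp ⟨n-1, by omega⟩)) ∧
    (∀ π₁ κ₁ π₂ κ₂ : FP n, IsNC π₁ → IsKrewerasPair π₁ κ₁ → Ll σ π₁ → Ll τ κ₁ →
      IsNC π₂ → IsKrewerasPair π₂ κ₂ → Ll σ π₂ → Ll τ κ₂ → π₁ = π₂) := by
  have : NeZero n := ⟨hn.ne'⟩
  obtain rfl := hκσ.eq_kreweras hσ
  have hends : σp⁻¹ ⟨0, hn⟩ = τp ⟨n-1, by omega⟩ ↔ EndsMeet σ τ := by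
    rw [endsMeet_iff hσp hτp]
    rfl
  refine ⟨⟨?_, ?_⟩, ?_⟩
  · rintro ⟨π, κ, hπ, hκ, hσπ, hτκ⟩
    obtain rfl := hκ.eq_kreweras hπ
    exact ⟨le_trans (α := FP n) hτκ.1 (kreweras_antitone hσπ.1),
      hends.2 (endsMeet_of_ll hπ hσπ hτκ)⟩
  · rintro ⟨href, h⟩
    obtain ⟨π, hπ, hσπ, hτπ⟩ := exists_ll_kreweras hτ σ hσ href (hends.1 h)
    exact ⟨π, _, hπ, isKrewerasPair_kreweras hπ, hσπ, hτπ⟩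
  · intro π₁ κ₁ π₂ κ₂ hπ₁ hκ₁ h₁σ h₁τ hπ₂ hκ₂ h₂σ h₂τ
    obtain rfl := hκ₁.eq_kreweras hπ₁
    obtain rfl := hκ₂.eq_kreweras hπ₂
    exact eq_of_ll hπ₁ hπ₂ h₁σ h₁τ h₂σ h₂τ

end BBP
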